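/- (Third bound on ρ̃, Lemma 2(vi).) Let 1/2 ≤ p ≤ 1, let p₊, p₋ ≥ 0 with p₊ + p₋ = 1, let v₊, v₋ be unit vectors in ℝ³, let z = (0,0,1), and assume p₊·v₊ + p₋·v₋ = (2p−1)·z. Then for every unit vector λ in ℝ³, ρ̃(λ) ≤ √(p(1−p))/π, where ρ̃(λ) := (1/π)[ p₊·Θ(λ·v₊) + p₋·Θ(λ·v₋) − (2p−1)·Θ(λ·z) ]. -/

import Mathlib

open MeasureTheory
open scoped RealInnerProductSpace

/-- `Θ(z) = z` for `z ≥ 0` and `0` otherwise. -/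
noncomputable def Theta (z : ℝ) : ℝ := if 0 ≤ z then z else 0

/-- The vector `z = (0,0,1)` in `ℝ³`. -/
noncomputable def zvec : EuclideanSpace ℝ (Fin 3) := EuclideanSpace.single 2 (1 : ℝ)

/-- The extra density `ρ̃(λ)`. -/
noncomputable def rhoTilde (p pP pM : ℝ) (vP vM lam : EuclideanSpace ℝ (Fin 3)) : ℝ :=
  (1 / Real.pi) *
    (pP * Theta ⟪lam, vP⟫ + pM * Theta ⟪lam, vM⟫ - (2 * p - 1) * Theta ⟪lam, zvec⟫)

/-!
Put `X = p₊ • v₊`, `Y = p₋ • v₋`, `x = ⟪λ, X⟫`, `y = ⟪λ, Y⟫`. Since `Θ` is positively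
homogeneous and `X + Y = (2p - 1) • z`, we get `π ρ̃(λ) = Θ x + Θ y - Θ (x + y)`. This vanishes
unless `x` and `y` have opposite signs, and is then `min |x| |y| ≤ √(-x y)`.
Cauchy–Schwarz for `X` and the reflection of `Y` in the line `ℝ λ` gives
`-x y ≤ (‖X‖ ‖Y‖ - ⟪X, Y⟫) / 2 = ((‖X‖ + ‖Y‖)² - ‖X + Y‖²) / 4 = (1 - (2p - 1)²) / 4 = p (1 - p)`.
-/

lemma Theta_eq_max (z : ℝ) : Theta z = max z 0 := by
  unfold Theta
  split_ifs with h
  · exact (max_eq_left h).symm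
  · exact (max_eq_right (le_of_not_ge h)).symm

lemma Theta_mul {k : ℝ} (hk : 0 ≤ k) (z : ℝ) : Theta (k * z) = k * Theta z := by
  rw [Theta_eq_max, Theta_eq_max, mul_max_of_nonneg _ _ hk, mul_zero]

lemma Theta_add_Theta_sub_Theta_add_le_sqrt (x y : ℝ) :
    Theta x + Theta y - Theta (x + y) ≤ √(-(x * y)) := by
  by_cases h : Theta x + Theta y - Theta (x + y) ≤ 0
  · exact h.trans (Real.sqrt_nonneg _)
  · refine Real.le_sqrt_of_sq_le ?_
    unfold Theta at *
    split_ifs at * <;> nlinarith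

lemma neg_inner_mul_inner_le {E : Type*} [NormedAddCommGroup E] [InnerProductSpace ℝ E]
    {u : E} (hu : ‖u‖ = 1) (x y : E) :
    -(⟪u, x⟫ * ⟪u, y⟫) ≤ ((‖x‖ + ‖y‖) ^ 2 - ‖x + y‖ ^ 2) / 4 := by
  have hrefl : ⟪x, (ℝ ∙ u).reflection y⟫ = 2 * (⟪u, x⟫ * ⟪u, y⟫) - ⟪x, y⟫ := by
    rw [Submodule.reflection_singleton_apply, hu]
    simp only [two_smul, RCLike.ofReal_one, one_pow, div_one, inner_sub_right, inner_add_right,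
      real_inner_smul_right, real_inner_comm x u]
    ring
  have hCS : -⟪x, (ℝ ∙ u).reflection y⟫ ≤ ‖x‖ * ‖y‖ := by
    simpa only [LinearIsometryEquiv.norm_map] using
      (neg_le_abs _).trans (abs_real_inner_le_norm x ((ℝ ∙ u).reflection y))
  have := norm_add_sq_real x y
  linarith

lemma norm_zvec : ‖zvec‖ = 1 := by
  simp [zvec]

lemma rhoTilde_eq {p pP pM : ℝ} (hp : 0 ≤ 2 * p - 1) (hpP : 0 ≤ pP) (hpM : 0 ≤ pM)
    {vP vM : EuclideanSpace ℝ (Fin 3)} (hcombo : pP • vP + pM • vM = (2 * p - 1) • zvec)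
    (lam : EuclideanSpace ℝ (Fin 3)) :
    rhoTilde p pP pM vP vM lam =
      (Theta ⟪lam, pP • vP⟫ + Theta ⟪lam, pM • vM⟫ - Theta (⟪lam, pP • vP⟫ + ⟪lam, pM • vM⟫)) /
        Real.pi := by
  rw [← inner_add_right, hcombo]
  simp only [real_inner_smul_right, Theta_mul hpP, Theta_mul hpM, Theta_mul hp, rhoTilde]
  ring

theorem rhoTilde_third_bound_general
    (p pP pM : ℝ) (hp : 1 / 2 ≤ p)
    (hpP : 0 ≤ pP) (hpM : 0 ≤ pM) (hsum : pP + pM = 1)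
    (vP vM : EuclideanSpace ℝ (Fin 3)) (hvP : ‖vP‖ = 1) (hvM : ‖vM‖ = 1)
    (hcombo : pP • vP + pM • vM = (2 * p - 1) • zvec)
    (lam : EuclideanSpace ℝ (Fin 3)) (hlam : ‖lam‖ = 1) :
    rhoTilde p pP pM vP vM lam ≤ Real.sqrt (p * (1 - p)) / Real.pi := by
  have hp₀ : 0 ≤ 2 * p - 1 := by linarith
  have norm_smul_unit {c : ℝ} {v : EuclideanSpace ℝ (Fin 3)} (hc : 0 ≤ c) (hv : ‖v‖ = 1) :
      ‖c • v‖ = c := by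
    rw [norm_smul, hv, Real.norm_of_nonneg hc, mul_one]
  have hcross : -(⟪lam, pP • vP⟫ * ⟪lam, pM • vM⟫) ≤ p * (1 - p) := by
    have h := neg_inner_mul_inner_le hlam (pP • vP) (pM • vM)
    rwa [norm_smul_unit hpP hvP, norm_smul_unit hpM hvM, hcombo, norm_smul_unit hp₀ norm_zvec,
      hsum, show ((1 : ℝ) ^ 2 - (2 * p - 1) ^ 2) / 4 = p * (1 - p) by ring] at h
  rw [rhoTilde_eq hp₀ hpP hpM hcombo]
  gcongr
  calc _ ≤ √(-(⟪lam, pP • vP⟫ * ⟪lam, pM • vM⟫)) := Theta_add_Theta_sub_Theta_add_le_sqrt _ _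
    _ ≤ √(p * (1 - p)) := Real.sqrt_le_sqrt hcross

/-- Lemma 2(vi): third bound on `ρ̃`, namely `ρ̃(λ) ≤ √(p(1−p))/π`. -/
theorem rhoTilde_third_bound
    (p pP pM : ℝ) (hp : 1 / 2 ≤ p) (hp' : p ≤ 1)
    (hpP : 0 ≤ pP) (hpM : 0 ≤ pM) (hsum : pP + pM = 1)
    (vP vM : EuclideanSpace ℝ (Fin 3)) (hvP : ‖vP‖ = 1) (hvM : ‖vM‖ = 1)
    (hcombo : pP • vP + pM • vM = (2 * p - 1) • zvec)
    (lam : EuclideanSpace ℝ (Fin 3)) (hlam : ‖lam‖ = 1) :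
    rhoTilde p pP pM vP vM lam ≤ Real.sqrt (p * (1 - p)) / Real.pi :=
  rhoTilde_third_bound_general p pP pM hp hpP hpM hsum vP vM hvP hvM hcombo lam hlam
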